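/- The Hamming distance between partitions is the minimum-size-weight partition distance: for all partitions P, Q of Fin n, δ_s(P,Q) = HD(P,Q) = s(P) + s(Q) − 2·s(P ⊓ Q), where δ_s is the minimum-weight walk distance in the Hasse-diagram graph with edge weights given by differences of the size s. -/

import Mathlib

open scoped BigOperators

/-- The size `s(P)` of a partition `P` of `Fin n`: the number of unordered pairs
`{i,j}` of distinct elements of `Fin n` that are `P`-equivalent (counted as
ordered pairs `(i,j)` with `i < j`). -/
noncomputable def partSize (n : ℕ) (P : Setoid (Fin n)) : ℕ :=
  Set.ncard {p : Fin n × Fin n | p.1 < p.2 ∧ P.r p.1 p.2}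

/-- Hamming distance between partitions: `HD(P,Q) = s(P) + s(Q) - 2 s(P ⊓ Q)`. -/
noncomputable def HD (n : ℕ) (P Q : Setoid (Fin n)) : ℤ :=
  (partSize n P : ℤ) + (partSize n Q : ℤ) - 2 * (partSize n (P ⊓ Q) : ℤ)

/-- The Hasse-diagram graph of the partition lattice: `P` and `Q` are adjacent
iff one covers the other. -/
def hasse (n : ℕ) : SimpleGraph (Setoid (Fin n)) where
  Adj P Q := P ⋖ Q ∨ Q ⋖ P
  symm := ⟨fun P Q h => h.symm⟩
  loopless := ⟨fun P h => by cases h with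
    | inl h => exact lt_irrefl P h.lt
    | inr h => exact lt_irrefl P h.lt⟩

/-- The weight of an edge `{P,Q}` induced by `f`: `|f(P) - f(Q)|`. -/
noncomputable def eWeight {n : ℕ} (f : Setoid (Fin n) → ℝ) : Sym2 (Setoid (Fin n)) → ℝ :=
  Sym2.lift ⟨fun P Q => |f P - f Q|, fun P Q => abs_sub_comm (f P) (f Q)⟩

/-- The weight of a walk in the Hasse diagram: the sum of its edge weights. -/
noncomputable def walkWeight {n : ℕ} (f : Setoid (Fin n) → ℝ) {P Q : Setoid (Fin n)}
    (W : (hasse n).Walk P Q) : ℝ :=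
  (W.edges.map (eWeight f)).sum

/-- The minimum-`f`-weight distance `δ_f(P,Q)`: the minimum weight of a walk
from `P` to `Q` in the Hasse diagram. -/
noncomputable def deltaW {n : ℕ} (f : Setoid (Fin n) → ℝ) (P Q : Setoid (Fin n)) : ℝ :=
  sInf {w : ℝ | ∃ W : (hasse n).Walk P Q, walkWeight f W = w}

/-!
Send a partition `R` to the finite set `relPairs R` of its related pairs `i < j`, so that
`s(R) = #(relPairs R)`, `relPairs (P ⊓ Q) = relPairs P ∩ relPairs Q`, and hence
`HD(P,Q) = #(relPairs P ∆ relPairs Q)`. Along a covering edge the sets are nested, so the edge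
weight is the cardinality of their symmetric difference; by the triangle inequality for `∆`, every
walk from `P` to `Q` weighs at least `HD(P,Q)`. Conversely, climbing a maximal chain from `P ⊓ Q`
to `P` costs `s(P) - s(P ⊓ Q)` since `s` is monotone, and likewise to `Q`; going down the first
chain and up the second is a walk of weight exactly `HD(P,Q)`.
-/

open scoped symmDiff
open Finset

namespace Finset

variable {α : Type*} [DecidableEq α]

lemma card_symmDiff_add_two_mul_card_inter (s t : Finset α) :
    #(s ∆ t) + 2 * #(s ∩ t) = #s + #t := by
  have hsub : s ∩ t ⊆ s ∪ t := inter_subset_union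
  rw [symmDiff_eq_sup_sdiff_inf, sup_eq_union, inf_eq_inter, card_sdiff_of_subset hsub]
  have := card_union_add_card_inter s t
  have := card_le_card hsub
  omega

lemma card_symmDiff_le (s t u : Finset α) : #(s ∆ u) ≤ #(s ∆ t) + #(t ∆ u) :=
  (card_le_card (symmDiff_triangle s t u)).trans (card_union_le _ _)

lemma card_symmDiff_of_subset {s t : Finset α} (h : s ⊆ t) : #(s ∆ t) = #t - #s := by
  rw [symmDiff_of_le h, card_sdiff_of_subset h]

end Finset

instance Setoid.finite {α : Type*} [Finite α] : Finite (Setoid α) :=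
  Finite.of_injective (fun R : Setoid α => ⇑R) fun _ _ => Setoid.eq_iff_rel_eq.mpr

section Walks

variable {n : ℕ} (f : Setoid (Fin n) → ℝ)

@[simp]
lemma walkWeight_nil {P : Setoid (Fin n)} : walkWeight f (SimpleGraph.Walk.nil : (hasse n).Walk P P) = 0 :=
  rfl

@[simp]
lemma walkWeight_cons {P Q R : Setoid (Fin n)} (h : (hasse n).Adj P Q) (W : (hasse n).Walk Q R) :
    walkWeight f (SimpleGraph.Walk.cons h W) = |f P - f Q| + walkWeight f W :=
  rfl

lemma walkWeight_append {P Q R : Setoid (Fin n)} (W : (hasse n).Walk P Q)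
    (W' : (hasse n).Walk Q R) : walkWeight f (W.append W') = walkWeight f W + walkWeight f W' := by
  simp [walkWeight, SimpleGraph.Walk.edges_append]

lemma walkWeight_reverse {P Q : Setoid (Fin n)} (W : (hasse n).Walk P Q) :
    walkWeight f W.reverse = walkWeight f W := by
  simp [walkWeight, SimpleGraph.Walk.edges_reverse, List.sum_reverse]

lemma le_walkWeight (d : Setoid (Fin n) → Setoid (Fin n) → ℝ) (hd_self : ∀ R, d R R = 0)
    (hd_triangle : ∀ R S T, d R T ≤ d R S + d S T)
    (hd_adj : ∀ R S, (hasse n).Adj R S → d R S ≤ |f R - f S|)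
    {P Q : Setoid (Fin n)} (W : (hasse n).Walk P Q) : d P Q ≤ walkWeight f W := by
  induction W with
  | nil => simp [hd_self]
  | @cons R S T h W ih =>
    rw [walkWeight_cons]
    linarith [hd_triangle R S T, hd_adj R S h]

lemma exists_walkWeight_eq_sub_of_le (hf : Monotone f) {R S : Setoid (Fin n)} (hRS : R ≤ S) :
    ∃ W : (hasse n).Walk R S, walkWeight f W = f S - f R := by
  induction R using WellFoundedGT.induction with
  | _ R ih =>
  rcases hRS.eq_or_lt with rfl | hlt
  · exact ⟨SimpleGraph.Walk.nil, by simp⟩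
  obtain ⟨M, hRM, hMS⟩ := exists_covBy_le_of_lt hlt
  obtain ⟨W, hW⟩ := ih M hRM.lt hMS
  have hadj : (hasse n).Adj R M := Or.inl hRM
  refine ⟨SimpleGraph.Walk.cons hadj W, ?_⟩
  rw [walkWeight_cons, hW, abs_sub_comm, abs_of_nonneg (sub_nonneg.mpr (hf hRM.le))]
  ring

lemma deltaW_eq {P Q : Setoid (Fin n)} {w : ℝ} (W : (hasse n).Walk P Q)
    (hW : walkWeight f W = w) (hle : ∀ W' : (hasse n).Walk P Q, w ≤ walkWeight f W') :
    deltaW f P Q = w :=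
  IsLeast.csInf_eq ⟨⟨W, hW⟩, by rintro _ ⟨W', rfl⟩; exact hle W'⟩

end Walks

section RelPairs

variable {n : ℕ}

open Classical in
noncomputable def relPairs (R : Setoid (Fin n)) : Finset (Fin n × Fin n) :=
  {p | p.1 < p.2 ∧ R p.1 p.2}

lemma mem_relPairs {R : Setoid (Fin n)} {p : Fin n × Fin n} :
    p ∈ relPairs R ↔ p.1 < p.2 ∧ R p.1 p.2 := by
  simp [relPairs]

lemma partSize_eq_card_relPairs (R : Setoid (Fin n)) : partSize n R = #(relPairs R) := by
  rw [partSize, ← Set.ncard_coe_finset]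
  congr
  ext p
  simp [mem_relPairs]

lemma relPairs_mono : Monotone (relPairs (n := n)) := fun _ _ h _ hp =>
  mem_relPairs.mpr ⟨(mem_relPairs.mp hp).1, h (mem_relPairs.mp hp).2⟩

lemma relPairs_inf (P Q : Setoid (Fin n)) : relPairs (P ⊓ Q) = relPairs P ∩ relPairs Q := by
  ext p
  simp only [mem_inter, mem_relPairs]
  constructor
  · rintro ⟨hlt, hP, hQ⟩
    exact ⟨⟨hlt, hP⟩, hlt, hQ⟩
  · rintro ⟨⟨hlt, hP⟩, -, hQ⟩
    exact ⟨hlt, hP, hQ⟩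

lemma partSize_monotone : Monotone fun R : Setoid (Fin n) => (partSize n R : ℝ) := fun _ _ h => by
  simp only [partSize_eq_card_relPairs]
  exact_mod_cast card_le_card (relPairs_mono h)

lemma card_relPairs_symmDiff_of_le {R S : Setoid (Fin n)} (h : R ≤ S) :
    (#(relPairs R ∆ relPairs S) : ℝ) = |(partSize n R : ℝ) - partSize n S| := by
  have hcard := card_le_card (relPairs_mono h)
  rw [card_symmDiff_of_subset (relPairs_mono h), partSize_eq_card_relPairs,
    partSize_eq_card_relPairs, Nat.cast_sub hcard, abs_sub_comm,
    abs_of_nonneg (sub_nonneg.mpr (by exact_mod_cast hcard))]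

lemma card_relPairs_symmDiff_of_adj {R S : Setoid (Fin n)} (h : (hasse n).Adj R S) :
    (#(relPairs R ∆ relPairs S) : ℝ) = |(partSize n R : ℝ) - partSize n S| := by
  rcases h with h | h
  · exact card_relPairs_symmDiff_of_le h.le
  · rw [symmDiff_comm, abs_sub_comm]
    exact card_relPairs_symmDiff_of_le h.le

lemma HD_eq_card_symmDiff (P Q : Setoid (Fin n)) : HD n P Q = #(relPairs P ∆ relPairs Q) := by
  have := card_symmDiff_add_two_mul_card_inter (relPairs P) (relPairs Q)
  rw [HD, partSize_eq_card_relPairs, partSize_eq_card_relPairs, partSize_eq_card_relPairs,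
    relPairs_inf]
  omega

end RelPairs

/-- The Hamming distance is the minimum-size-weight partition distance:
`δ_s(P,Q) = HD(P,Q) = s(P) + s(Q) - 2 s(P ⊓ Q)`. -/
theorem deltaW_size_eq_HD (n : ℕ) (P Q : Setoid (Fin n)) :
    deltaW (fun R => (partSize n R : ℝ)) P Q = (HD n P Q : ℝ) ∧
    (HD n P Q : ℝ) =
      (partSize n P : ℝ) + (partSize n Q : ℝ) - 2 * (partSize n (P ⊓ Q) : ℝ) := by
  have hHD : (HD n P Q : ℝ) =
      (partSize n P : ℝ) + (partSize n Q : ℝ) - 2 * (partSize n (P ⊓ Q) : ℝ) := by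
    push_cast [HD]
    ring
  refine ⟨?_, hHD⟩
  obtain ⟨W₁, hW₁⟩ := exists_walkWeight_eq_sub_of_le _ partSize_monotone (inf_le_left : P ⊓ Q ≤ P)
  obtain ⟨W₂, hW₂⟩ := exists_walkWeight_eq_sub_of_le _ partSize_monotone (inf_le_right : P ⊓ Q ≤ Q)
  refine deltaW_eq _ (W₁.reverse.append W₂) ?_ fun W => ?_
  · rw [walkWeight_append, walkWeight_reverse, hW₁, hW₂, hHD]
    ring
  · rw [HD_eq_card_symmDiff, Int.cast_natCast]
    exact le_walkWeight _ (fun R S => (#(relPairs R ∆ relPairs S) : ℝ)) (by simp)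
      (fun R S T => by exact_mod_cast card_symmDiff_le _ _ _)
      (fun _ _ h => (card_relPairs_symmDiff_of_adj h).le) W
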